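/- arXiv:1506.06038 — 4 statements merged into one kernel-verified Lean document; each statement's English description precedes it below -/
import Mathlib

section
/- Let Σ and Γ be alphabets, 𝕄 = (M,+,val,𝟘) a timed valuation monoid and h : Γ → Σ a mapping. If r : 𝕋Γ⁺ → M is a recognizable quantitative timed language over 𝕄, then the quantitative timed language h(r) : 𝕋Σ⁺ → M is also recognizable over 𝕄. -/
open scoped NNReal Classical

/-! # Core definitions: timed automata and weighted timed automata -/

/-- Comparison operators ⋈ ∈ {<, ≤, =, ≥, >}. -/
inductive Cmp : Type
  | lt | le | eq | ge | gt
  deriving DecidableEq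

/-- Evaluation of a comparison `r ⋈ c` for `r ∈ ℝ≥0` and `c ∈ ℕ`. -/
def Cmp.eval : Cmp → ℝ≥0 → ℕ → Prop
  | .lt, r, c => r < (c : ℝ≥0)
  | .le, r, c => r ≤ (c : ℝ≥0)
  | .eq, r, c => r = (c : ℝ≥0)
  | .ge, r, c => (c : ℝ≥0) ≤ r
  | .gt, r, c => (c : ℝ≥0) < r

/-- Clock constraints over a set `C` of clocks: `True` or conjunctions of `x ⋈ c`. -/
inductive ClockConstraint (C : Type) : Type
  | tt : ClockConstraint C
  | atom : C → Cmp → ℕ → ClockConstraint C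
  | conj : ClockConstraint C → ClockConstraint C → ClockConstraint C

/-- A clock valuation assigns a non-negative real to each clock. -/
def ClockVal (C : Type) : Type := C → ℝ≥0

/-- Satisfaction of clock constraints. -/
def ClockConstraint.Sat {C : Type} (ν : ClockVal C) : ClockConstraint C → Prop
  | .tt => True
  | .atom x op c => op.eval (ν x) c
  | .conj φ ψ => φ.Sat ν ∧ ψ.Sat ν

/-- `ν + t`: add `t` to every clock. -/
def ClockVal.add {C : Type} (ν : ClockVal C) (t : ℝ≥0) : ClockVal C := fun x => ν x + t

/-- `ν[Λ := 0]`: reset the clocks in `Λ` to `0`. -/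
noncomputable def ClockVal.reset {C : Type} (ν : ClockVal C) (Λ : Set C) : ClockVal C :=
  fun x => if x ∈ Λ then 0 else ν x

/-- The clock valuation assigning `0` to every clock. -/
def ClockVal.zero {C : Type} : ClockVal C := fun _ => 0

/-- An edge of a timed automaton: an element of `L × Σ × Φ(C) × 2^C × L`. -/
structure Edge (L A C : Type) : Type where
  src : L
  label : A
  guard : ClockConstraint C
  reset : Set C
  dst : L

/-- A timed automaton over the alphabet `A`. -/
structure TimedAutomaton (A : Type) : Type 1 where
  L : Type
  C : Type
  finL : Finite L
  finC : Finite C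
  I : Set L
  F : Set L
  E : Set (Edge L A C)
  finE : E.Finite

/-- A (non-empty finite) timed word over `A`. -/
abbrev TimedWord (A : Type) : Type := { w : List (A × ℝ≥0) // w ≠ [] }

/-- `T.IsRunFrom ℓ ν w es` holds iff `es` is the sequence of edges of a run of `T`
reading the timed word `w`, starting in location `ℓ` with clock valuation `ν`,
and ending in a final location. -/
def TimedAutomaton.IsRunFrom {A : Type} (T : TimedAutomaton A) :
    T.L → ClockVal T.C → List (A × ℝ≥0) → List (Edge T.L A T.C) → Prop
  | ℓ, _, [], [] => ℓ ∈ T.F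
  | ℓ, ν, (a, t) :: w, e :: es =>
      e ∈ T.E ∧ e.src = ℓ ∧ e.label = a ∧ e.guard.Sat (ν.add t) ∧
      T.IsRunFrom e.dst ((ν.add t).reset e.reset) w es
  | _, _, [], _ :: _ => False
  | _, _, _ :: _, [] => False

/-- `Run_T(w)`: the set of runs (identified with their edge sequences) of `T` on `w`. -/
def TimedAutomaton.RunOn {A : Type} (T : TimedAutomaton A) (w : TimedWord A) :
    Set (List (Edge T.L A T.C)) :=
  { es | ∃ ℓ₀ ∈ T.I, T.IsRunFrom ℓ₀ ClockVal.zero w.1 es }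

/-- `L(T)`: the timed language accepted by `T`. -/
def TimedAutomaton.Lang {A : Type} (T : TimedAutomaton A) : Set (TimedWord A) :=
  { w | (T.RunOn w).Nonempty }

/-- A timed automaton is unambiguous if every timed word has at most one run. -/
def TimedAutomaton.Unambiguous {A : Type} (T : TimedAutomaton A) : Prop :=
  ∀ w : TimedWord A, (T.RunOn w).Subsingleton

/-- A timed automaton is deterministic if it has a single initial location and the guards of
any two distinct edges with the same source and label are jointly unsatisfiable. -/
def TimedAutomaton.Deterministic {A : Type} (T : TimedAutomaton A) : Prop :=
  (∃ ℓ, T.I = {ℓ}) ∧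
  ∀ e₁ ∈ T.E, ∀ e₂ ∈ T.E, e₁.src = e₂.src → e₁.label = e₂.label → e₁ ≠ e₂ →
    ∀ ν : ClockVal T.C, ¬ (e₁.guard.Sat ν ∧ e₂.guard.Sat ν)

/-- A timed automaton is sequential if it has a single initial location and any two edges
with the same source and label are equal. -/
def TimedAutomaton.Sequential {A : Type} (T : TimedAutomaton A) : Prop :=
  (∃ ℓ, T.I = {ℓ}) ∧
  ∀ e₁ ∈ T.E, ∀ e₂ ∈ T.E, e₁.src = e₂.src → e₁.label = e₂.label → e₁ = e₂

/-- A timed language is recognizable by a timed automaton satisfying `P`. -/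
def TLRecognizableBy {A : Type} (P : TimedAutomaton A → Prop) (𝓛 : Set (TimedWord A)) : Prop :=
  ∃ T : TimedAutomaton A, P T ∧ T.Lang = 𝓛

/-- A weighted timed automaton over the alphabet `A` and (the domain `M` of) a timed
valuation monoid: a timed automaton together with weights on locations and edges.
The timed valuation monoid itself is given by an `AddCommMonoid M` instance together with a
timed valuation function `val : List ((M × M) × ℝ≥0) → M` (only its values on non-empty
lists, i.e. on `𝕋(M×M)⁺`, ever matter). -/
structure WTA (A M : Type) extends TimedAutomaton A where
  wtL : L → M
  wtE : Edge L A C → M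

/-- The timed word `wt♯(ρ) ∈ 𝕋(M×M)⁺` associated with a run: the `i`-th letter is
`((wt(ℓ_{i-1}), wt(e_i)), t_i)`, where `ℓ_{i-1}` is the source location of edge `e_i`. -/
def WTA.runWord {A M : Type} (W : WTA A M) (w : List (A × ℝ≥0))
    (es : List (Edge W.L A W.C)) : List ((M × M) × ℝ≥0) :=
  List.zipWith (fun (p : A × ℝ≥0) e => ((W.wtL e.src, W.wtE e), p.2)) w es

/-- The behavior `‖W‖ : 𝕋A⁺ → M` of a WTA: `‖W‖(w) = Σ (val(wt♯(ρ)) : ρ ∈ Run_W(w))`,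
the empty sum being `0` (the monoid unit `𝟘`). -/
noncomputable def WTA.behavior {A M : Type} [AddCommMonoid M]
    (val : List ((M × M) × ℝ≥0) → M) (W : WTA A M) (w : TimedWord A) : M :=
  ∑ᶠ es ∈ W.toTimedAutomaton.RunOn w, val (W.runWord w.1 es)

/-- A quantitative timed language `r : 𝕋A⁺ → M` is recognizable over the timed valuation
monoid `(M, +, val, 𝟘)` by a WTA whose underlying timed automaton satisfies `P`. -/
def QTLRecognizableBy {A M : Type} [AddCommMonoid M] (val : List ((M × M) × ℝ≥0) → M)
    (P : TimedAutomaton A → Prop) (r : TimedWord A → M) : Prop :=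
  ∃ W : WTA A M, P W.toTimedAutomaton ∧ ∀ w, W.behavior val w = r w

/-- Recognizability (no restriction on the underlying timed automaton). -/
def QTLRecognizable {A M : Type} [AddCommMonoid M] (val : List ((M × M) × ℝ≥0) → M)
    (r : TimedWord A → M) : Prop :=
  ∃ W : WTA A M, ∀ w, W.behavior val w = r w

/-- Renaming of timed words along `h : Γ → A`. -/
def mapTimedWord {Γ A : Type} (h : Γ → A) (v : TimedWord Γ) : TimedWord A :=
  ⟨v.1.map (fun p => (h p.1, p.2)), by
    cases v with
    | mk l hl => cases l with
      | nil => exact absurd rfl hl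
      | cons p l => simp⟩

/-- `h(r)(w) = Σ (r(v) : v ∈ 𝕋Γ⁺, h(v) = w)` (a finite sum when `Γ` is finite). -/
noncomputable def pushQTL {Γ A M : Type} [AddCommMonoid M] (h : Γ → A)
    (r : TimedWord Γ → M) (w : TimedWord A) : M :=
  ∑ᶠ v ∈ { v : TimedWord Γ | mapTimedWord h v = w }, r v

/-- `(val ∘ g)(w) = val((g(a₁),t₁)…(g(aₙ),tₙ))`. -/
def valComp {A M : Type} (val : List ((M × M) × ℝ≥0) → M) (g : A → M × M)
    (w : TimedWord A) : M :=
  val (w.1.map (fun p => (g p.1, p.2)))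

/-- The intersection `r ∩ 𝓛` of a quantitative timed language with a timed language. -/
noncomputable def interQTL {A M : Type} [Zero M] (r : TimedWord A → M)
    (𝓛 : Set (TimedWord A)) (w : TimedWord A) : M :=
  if w ∈ 𝓛 then r w else 0

/-- Membership in the Nivat class `N^P(A, 𝕄)`: `𝕃 = h((val ∘ g) ∩ 𝓛)` for some alphabet `Γ`,
maps `h : Γ → A`, `g : Γ → M × M` and a timed language `𝓛` recognizable by a timed
automaton satisfying `P`. -/
def NivatMem {A M : Type} [AddCommMonoid M] (val : List ((M × M) × ℝ≥0) → M)
    (P : ∀ {Γ : Type}, TimedAutomaton Γ → Prop) (𝕃 : TimedWord A → M) : Prop :=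
  ∃ (Γ : Type) (_ : Finite Γ) (_ : Nonempty Γ) (h : Γ → A) (g : Γ → M × M)
    (𝓛 : Set (TimedWord Γ)),
      TLRecognizableBy P 𝓛 ∧ ∀ w, 𝕃 w = pushQTL h (interQTL (valComp val g) 𝓛) w

/-- Membership in the class `H^P(A, 𝕄)`: `𝕃 = h(r)` for some alphabet `Γ`, `h : Γ → A`
and a quantitative timed language `r` recognizable by a WTA whose underlying timed
automaton satisfies `P`. -/
def HMem {A M : Type} [AddCommMonoid M] (val : List ((M × M) × ℝ≥0) → M)
    (P : ∀ {Γ : Type}, TimedAutomaton Γ → Prop) (𝕃 : TimedWord A → M) : Prop :=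
  ∃ (Γ : Type) (_ : Finite Γ) (_ : Nonempty Γ) (h : Γ → A) (r : TimedWord Γ → M),
      QTLRecognizableBy val (fun T => P T) r ∧ ∀ w, 𝕃 w = pushQTL h r w

/-- Idempotency of a timed valuation monoid. -/
def IsIdempotent (M : Type) [Add M] : Prop := ∀ m : M, m + m = m

/-- Location-independence of a timed valuation function: the value of `val` on a non-empty
timed word over `M × M` depends only on the second components and the time stamps. -/
def LocIndep {M : Type} (val : List ((M × M) × ℝ≥0) → M) : Prop :=
  ∀ l l' : List ((M × M) × ℝ≥0), l ≠ [] →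
    l.map (fun p => (p.1.2, p.2)) = l'.map (fun p => (p.1.2, p.2)) → val l = val l'


/-! Relabel every edge `(ℓ, γ, φ, Λ, ℓ')` of a WTA recognizing `r` to `(ℓ, h γ, φ, Λ, ℓ')`, keeping
its weight. To keep apart edges with the same image under `h`, a location also remembers the
letter of `Γ` read last (`none` before the first step). Runs of the relabelled automaton on `w`
then correspond, weight for weight, to pairs of a preimage `v` of `w` and a run of the original
automaton on `v`; summing over runs gives `h(r)(w)`. -/

lemma List.eq_of_map_fst_eq_of_map_snd_eq {α β : Type*} {l₁ l₂ : List (α × β)}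
    (h₁ : l₁.map Prod.fst = l₂.map Prod.fst) (h₂ : l₁.map Prod.snd = l₂.map Prod.snd) :
    l₁ = l₂ :=
  (List.zip_of_prod h₁ h₂).trans (List.zip_of_prod rfl rfl).symm

lemma List.finite_setOf_length_eq_forall_mem {X : Type*} {s : Set X} (hs : s.Finite) (n : ℕ) :
    {l : List X | l.length = n ∧ ∀ x ∈ l, x ∈ s}.Finite := by
  have := hs.to_subtype
  refine ((List.finite_length_eq s n).image (List.map Subtype.val)).subset ?_
  rintro l ⟨hlen, hmem⟩
  exact ⟨l.pmap Subtype.mk hmem, by simpa using hlen, by simp [List.map_pmap]⟩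

section mapTimedWord

variable {S Γ : Type}

lemma TimedWord.ext_of_map_fst_of_map_snd {A : Type} {v w : TimedWord A}
    (hfst : v.1.map Prod.fst = w.1.map Prod.fst) (hsnd : v.1.map Prod.snd = w.1.map Prod.snd) :
    v = w :=
  Subtype.ext (List.eq_of_map_fst_eq_of_map_snd_eq hfst hsnd)

lemma map_snd_eq_of_mapTimedWord_eq {h : Γ → S} {v : TimedWord Γ} {w : TimedWord S} (hv : mapTimedWord h v = w) :
    v.1.map Prod.snd = w.1.map Prod.snd := by
  simp [← hv, mapTimedWord, Function.comp_def]

lemma finite_setOf_mapTimedWord_eq [Finite Γ] (h : Γ → S) (w : TimedWord S) :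
    {v : TimedWord Γ | mapTimedWord h v = w}.Finite := by
  refine Set.Finite.of_finite_image (f := fun v => v.1.map Prod.fst) ?_ ?_
  · refine (List.finite_length_eq Γ w.1.length).subset ?_
    rintro _ ⟨v, rfl, rfl⟩
    simp [mapTimedWord]
  · intro v₁ hv₁ v₂ hv₂ hfst
    exact TimedWord.ext_of_map_fst_of_map_snd hfst
      ((map_snd_eq_of_mapTimedWord_eq hv₁).trans (map_snd_eq_of_mapTimedWord_eq hv₂).symm)

end mapTimedWord

namespace TimedAutomaton

variable {A : Type}

lemma IsRunFrom.length_eq_and_mem {T : TimedAutomaton A} :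
    ∀ {ℓ : T.L} {ν : ClockVal T.C} {w : List (A × ℝ≥0)} {es : List (Edge T.L A T.C)},
      T.IsRunFrom ℓ ν w es → es.length = w.length ∧ ∀ e ∈ es, e ∈ T.E
  | _, _, [], [], _ => ⟨rfl, by simp⟩
  | _, _, _ :: _, _ :: _, ⟨hE, _, _, _, hrun⟩ => by
      obtain ⟨hlen, hmem⟩ := hrun.length_eq_and_mem
      exact ⟨by simp [hlen], by simpa [hE] using hmem⟩

lemma IsRunFrom.map_label {T : TimedAutomaton A} :
    ∀ {ℓ : T.L} {ν : ClockVal T.C} {w : List (A × ℝ≥0)} {es : List (Edge T.L A T.C)},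
      T.IsRunFrom ℓ ν w es → es.map Edge.label = w.map Prod.fst
  | _, _, [], [], _ => rfl
  | _, _, _ :: _, _ :: _, ⟨_, _, hlabel, _, hrun⟩ => by simp [hlabel, hrun.map_label]

lemma finite_runOn (T : TimedAutomaton A) (w : TimedWord A) : (T.RunOn w).Finite :=
  (List.finite_setOf_length_eq_forall_mem T.finE w.1.length).subset
    fun _ ⟨_, _, hrun⟩ => hrun.length_eq_and_mem

end TimedAutomaton

namespace Edge

variable {S Γ L C : Type}

def relabel (h : Γ → S) (γ : Option Γ) (e : Edge L Γ C) : Edge (L × Option Γ) S C :=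
  ⟨(e.src, γ), h e.label, e.guard, e.reset, (e.dst, some e.label)⟩

def unrelabel (e : Edge (L × Option Γ) S C) : Option (Edge L Γ C) :=
  e.dst.2.map fun γ => ⟨e.src.1, γ, e.guard, e.reset, e.dst.1⟩

@[simp] lemma unrelabel_relabel (h : Γ → S) (γ : Option Γ) (e : Edge L Γ C) :
    (e.relabel h γ).unrelabel = some e := rfl

def relabelRun (h : Γ → S) : Option Γ → List (Edge L Γ C) → List (Edge (L × Option Γ) S C)
  | _, [] => []
  | γ, e :: es => e.relabel h γ :: relabelRun h (some e.label) es

lemma map_unrelabel_relabelRun (h : Γ → S) :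
    ∀ (γ : Option Γ) (es : List (Edge L Γ C)), (relabelRun h γ es).map unrelabel = es.map some
  | _, [] => rfl
  | _, e :: es => by simp [relabelRun, map_unrelabel_relabelRun h _ es]

lemma relabelRun_injective (h : Γ → S) (γ : Option Γ) :
    Function.Injective (relabelRun (L := L) (C := C) h γ) := fun es₁ es₂ heq =>
  List.map_injective_iff.2 (Option.some_injective _) <| by
    rw [← map_unrelabel_relabelRun h γ, heq, map_unrelabel_relabelRun]

end Edge

namespace TimedAutomaton

variable {S Γ : Type}

def relabel [Finite Γ] (T : TimedAutomaton Γ) (h : Γ → S) : TimedAutomaton S where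
  L := T.L × Option Γ
  C := T.C
  finL := have := T.finL; inferInstance
  finC := T.finC
  I := {p | p.1 ∈ T.I ∧ p.2 = none}
  F := {p | p.1 ∈ T.F}
  E := ⋃ γ, Edge.relabel h γ '' T.E
  finE := Set.finite_iUnion fun _ => T.finE.image _

section

variable [Finite Γ] {T : TimedAutomaton Γ} {h : Γ → S}

lemma IsRunFrom.relabel :
    ∀ {ℓ : T.L} {γ : Option Γ} {ν : ClockVal T.C} {v : List (Γ × ℝ≥0)}
      {es : List (Edge T.L Γ T.C)}, T.IsRunFrom ℓ ν v es →
      (T.relabel h).IsRunFrom (ℓ, γ) ν (v.map fun p => (h p.1, p.2)) (Edge.relabelRun h γ es)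
  | _, _, _, [], [], hF => hF
  | _, γ, _, _ :: _, e :: _, ⟨hE, hsrc, hlabel, hguard, hrun⟩ =>
      ⟨Set.mem_iUnion.2 ⟨γ, e, hE, rfl⟩, hsrc ▸ rfl, by simp [Edge.relabel, hlabel], hguard,
        hrun.relabel⟩

lemma exists_isRunFrom_of_isRunFrom_relabel :
    ∀ {ℓ : T.L} {γ : Option Γ} {ν : ClockVal T.C} {w : List (S × ℝ≥0)}
      {es' : List (Edge (T.L × Option Γ) S T.C)}, (T.relabel h).IsRunFrom (ℓ, γ) ν w es' →
      ∃ v es, v.map (fun p => (h p.1, p.2)) = w ∧ Edge.relabelRun h γ es = es' ∧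
        T.IsRunFrom ℓ ν v es
  | _, _, _, [], [], hF => ⟨[], [], rfl, rfl, hF⟩
  | _, γ, _, (a, t) :: _, _ :: _, ⟨hE, hsrc, hlabel, hguard, hrun⟩ => by
      obtain ⟨γ', e, he, rfl⟩ := Set.mem_iUnion.1 hE
      obtain ⟨hsrc, rfl⟩ := Prod.ext_iff.1 hsrc
      obtain ⟨v, es, rfl, rfl, hrun'⟩ := exists_isRunFrom_of_isRunFrom_relabel hrun
      exact ⟨(e.label, t) :: v, e :: es, by simpa [Edge.relabel] using hlabel, rfl,
        he, hsrc, rfl, hguard, hrun'⟩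

end

section

variable (T : TimedAutomaton Γ) (h : Γ → S)

lemma runOn_relabel [Finite Γ] (w : TimedWord S) :
    (T.relabel h).RunOn w =
      ⋃ v ∈ {v : TimedWord Γ | mapTimedWord h v = w}, Edge.relabelRun h none '' T.RunOn v := by
  ext es'
  constructor
  · rintro ⟨⟨ℓ, _⟩, ⟨hI, rfl⟩, hrun'⟩
    obtain ⟨v, es, hv, rfl, hrun⟩ := exists_isRunFrom_of_isRunFrom_relabel hrun'
    have hv_ne : v ≠ [] := by rintro rfl; exact w.2 hv.symm
    exact Set.mem_iUnion₂.2 ⟨⟨v, hv_ne⟩, Subtype.ext hv, es, ⟨ℓ, hI, hrun⟩, rfl⟩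
  · intro hes'
    obtain ⟨v, rfl, es, ⟨ℓ, hI, hrun⟩, rfl⟩ := Set.mem_iUnion₂.1 hes'
    exact ⟨(ℓ, none), ⟨hI, rfl⟩, hrun.relabel⟩

lemma pairwiseDisjoint_relabelRun_image_runOn (w : TimedWord S) :
    {v : TimedWord Γ | mapTimedWord h v = w}.PairwiseDisjoint
      fun v => Edge.relabelRun h none '' T.RunOn v := by
  intro v₁ hv₁ v₂ hv₂ hne
  refine Set.disjoint_left.2 ?_
  rintro _ ⟨es, ⟨_, _, hrun₁⟩, rfl⟩ ⟨es₂, ⟨_, _, hrun₂⟩, heq⟩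
  obtain rfl := Edge.relabelRun_injective h none heq
  exact hne <| TimedWord.ext_of_map_fst_of_map_snd (hrun₁.map_label.symm.trans hrun₂.map_label)
    ((map_snd_eq_of_mapTimedWord_eq hv₁).trans (map_snd_eq_of_mapTimedWord_eq hv₂).symm)

end

end TimedAutomaton

namespace WTA

variable {S Γ M : Type} [Finite Γ]

noncomputable def relabel [Zero M] (W : WTA Γ M) (h : Γ → S) : WTA S M :=
  { W.toTimedAutomaton.relabel h with
    wtL := fun p => W.wtL p.1
    wtE := fun e => e.unrelabel.elim 0 W.wtE }

lemma runWord_relabel [Zero M] (W : WTA Γ M) (h : Γ → S) :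
    ∀ (γ : Option Γ) (v : List (Γ × ℝ≥0)) (es : List (Edge W.L Γ W.C)),
      (W.relabel h).runWord (v.map fun p => (h p.1, p.2)) (Edge.relabelRun h γ es) =
        W.runWord v es
  | _, [], _ => rfl
  | _, _ :: _, [] => rfl
  | _, _ :: v, e :: es => congrArg (List.cons _) (runWord_relabel W h (some e.label) v es)

theorem behavior_relabel [AddCommMonoid M] (val : List ((M × M) × ℝ≥0) → M) (W : WTA Γ M)
    (h : Γ → S) (w : TimedWord S) :
    (W.relabel h).behavior val w = pushQTL h (W.behavior val) w := by
  let T := W.toTimedAutomaton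
  calc (W.relabel h).behavior val w
      = ∑ᶠ v ∈ {v : TimedWord Γ | mapTimedWord h v = w},
          ∑ᶠ es' ∈ Edge.relabelRun h none '' T.RunOn v, val ((W.relabel h).runWord w.1 es') := by
        rw [← finsum_mem_biUnion (T.pairwiseDisjoint_relabelRun_image_runOn h w)
          (finite_setOf_mapTimedWord_eq h w) fun v _ => (T.finite_runOn v).image _,
          ← T.runOn_relabel h w]
        rfl
    _ = pushQTL h (W.behavior val) w := by
        refine finsum_mem_congr rfl fun v (hv : mapTimedWord h v = w) => ?_
        rw [finsum_mem_image (Edge.relabelRun_injective h none).injOn, behavior, ← hv]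
        exact finsum_mem_congr rfl fun es _ => congrArg val (W.runWord_relabel h none v.1 es)

end WTA

theorem recognizable_pushQTL_general {S Γ M : Type} [Finite Γ]
    [AddCommMonoid M] (val : List ((M × M) × ℝ≥0) → M) (h : Γ → S)
    (r : TimedWord Γ → M) (hr : QTLRecognizable val r) :
    QTLRecognizable val (pushQTL h r) := by
  obtain ⟨W, hW⟩ := hr
  refine ⟨W.relabel h, fun w => ?_⟩
  rw [W.behavior_relabel val h w, funext hW]

/-- Lemma: closure under renaming. If `r : 𝕋Γ⁺ → M` is a recognizable
quantitative timed language over a timed valuation monoid `𝕄 = (M, +, val, 𝟘)` and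
`h : Γ → Σ'` is a mapping, then `h(r) : 𝕋Σ'⁺ → M` is also recognizable over `𝕄`. -/
theorem recognizable_pushQTL {S Γ M : Type} [Finite S] [Nonempty S] [Finite Γ] [Nonempty Γ]
    [AddCommMonoid M] (val : List ((M × M) × ℝ≥0) → M) (h : Γ → S)
    (r : TimedWord Γ → M) (hr : QTLRecognizable val r) :
    QTLRecognizable val (pushQTL h r) :=
  recognizable_pushQTL_general val h r hr
end

section
/- Let Σ be an alphabet, 𝕄 = (M,+,val,𝟘) a location-independent timed valuation monoid and g : Σ → M × M a mapping. Then the quantitative timed language val ∘ g : 𝕋Σ⁺ → M is sequentially recognizable. -/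
open scoped NNReal Classical

/-! The automaton with a single location and, for each letter `a`, an unguarded self-loop
labelled `a` of weight `(g a).2` is sequential, and its unique run on `w` produces the word
`g(w)` up to the location weights, which `val` ignores by location-independence. -/

namespace LocIndep

theorem val_map_eq {A M : Type} {val : List ((M × M) × ℝ≥0) → M} (hli : LocIndep val)
    {l : List (A × ℝ≥0)} (hl : l ≠ []) (f f' : A → M × M) (hf : ∀ a, (f a).2 = (f' a).2) :
    val (l.map fun p => (f p.1, p.2)) = val (l.map fun p => (f' p.1, p.2)) :=
  hli _ _ (by simpa using hl) (by simp [Function.comp_def, hf])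

end LocIndep

namespace WTA

variable {A M : Type}

def loopEdge (a : A) : Edge Unit A Unit := ⟨(), a, .tt, ∅, ()⟩

variable [Finite A]

def oneLocation (m : M) (wt : A → M) : WTA A M where
  L := Unit
  C := Unit
  finL := inferInstance
  finC := inferInstance
  I := {()}
  F := {()}
  E := Set.range loopEdge
  finE := Set.finite_range _
  wtL _ := m
  wtE e := wt e.label

variable (m : M) (wt : A → M)

theorem oneLocation_sequential : (oneLocation m wt).Sequential := by
  refine ⟨⟨(), rfl⟩, ?_⟩
  rintro _ ⟨a, rfl⟩ _ ⟨b, rfl⟩ - hab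
  exact congrArg loopEdge hab

theorem oneLocation_isRunFrom_iff (l : List (A × ℝ≥0)) (ν : ClockVal Unit)
    (es : List (Edge Unit A Unit)) :
    (oneLocation m wt).IsRunFrom () ν l es ↔ es = l.map (loopEdge ∘ Prod.fst) := by
  induction l generalizing ν es with
  | nil =>
    cases es with
    | nil => exact ⟨fun _ => rfl, fun _ => rfl⟩
    | cons => simp [TimedAutomaton.IsRunFrom]
  | cons p l ih =>
    obtain ⟨a, t⟩ := p
    cases es with
    | nil => simp [TimedAutomaton.IsRunFrom]
    | cons e es =>
      simp only [TimedAutomaton.IsRunFrom, List.map_cons, List.cons.injEq, Function.comp_apply]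
      constructor
      · rintro ⟨⟨b, rfl⟩, -, rfl, -, hrest⟩
        exact ⟨rfl, (ih _ _).1 hrest⟩
      · rintro ⟨rfl, hes⟩
        exact ⟨⟨a, rfl⟩, trivial, rfl, trivial, (ih _ _).2 hes⟩

theorem oneLocation_runOn (w : TimedWord A) :
    (oneLocation m wt).RunOn w = {w.1.map (loopEdge ∘ Prod.fst)} := by
  ext es
  simp only [TimedAutomaton.RunOn]
  exact ⟨fun ⟨_, _, h⟩ => (oneLocation_isRunFrom_iff m wt _ _ _).1 h,
    fun h => ⟨(), rfl, (oneLocation_isRunFrom_iff m wt _ _ _).2 h⟩⟩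

theorem oneLocation_behavior [AddCommMonoid M] (val : List ((M × M) × ℝ≥0) → M)
    (w : TimedWord A) :
    (oneLocation m wt).behavior val w = val (w.1.map fun p => ((m, wt p.1), p.2)) := by
  rw [behavior, oneLocation_runOn]
  erw [finsum_mem_singleton]
  unfold runWord
  erw [List.zipWith_map_right, List.zipWith_self]
  rfl

end WTA

theorem valComp_sequentially_recognizable_general {S M : Type} [Finite S]
    [AddCommMonoid M] (val : List ((M × M) × ℝ≥0) → M) (hli : LocIndep val)
    (g : S → M × M) :
    QTLRecognizableBy val TimedAutomaton.Sequential (valComp val g) := by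
  refine ⟨WTA.oneLocation 0 (fun a => (g a).2), WTA.oneLocation_sequential _ _, fun w => ?_⟩
  rw [WTA.oneLocation_behavior, valComp]
  exact hli.val_map_eq w.2 (fun a => (0, (g a).2)) g fun _ => rfl

/-- For every alphabet `Σ`, every location-independent timed valuation
monoid `𝕄 = (M,+,val,𝟘)` and every mapping `g : Σ → M × M`, the quantitative timed
language `val ∘ g` is sequentially recognizable. -/
theorem valComp_sequentially_recognizable {S M : Type} [Finite S] [Nonempty S]
    [AddCommMonoid M] (val : List ((M × M) × ℝ≥0) → M) (hli : LocIndep val)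
    (g : S → M × M) :
    QTLRecognizableBy val TimedAutomaton.Sequential (valComp val g) :=
  valComp_sequentially_recognizable_general val hli g
end

section
/- Let Σ = {a,b} be a two-letter alphabet, 𝕄 = 𝕄^sum, and g : Σ → M × M with g(a) = (1,0) and g(b) = (2,0). Then the quantitative timed language val^sum ∘ g : 𝕋Σ⁺ → ℝ ∪ {∞} is not deterministically recognizable, and hence not sequentially recognizable. -/
open scoped NNReal Classical

/-! # The timed valuation monoid 𝕄^sum = (ℝ ∪ {∞}, min, val^sum, ∞) -/

/-- The domain `ℝ ∪ {∞}` of `𝕄^sum`, equipped with `+ = min` and `𝟘 = ∞` via the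
tropical `AddCommMonoid` structure on `Tropical (WithTop ℝ)`. -/
abbrev MSum : Type := Tropical (WithTop ℝ)

/-- Multiplication `m · t` of `m ∈ ℝ ∪ {∞}` by a time `t ∈ ℝ≥0`, with the convention
`∞ · t = ∞` (for every `t`, including `t = 0`). -/
noncomputable def mulTime (m : WithTop ℝ) (t : ℝ≥0) : WithTop ℝ :=
  WithTop.map (fun r => r * (t : ℝ)) m

/-- `val^sum(((m₁,m₁'),t₁)…((mₙ,mₙ'),tₙ)) = Σᵢ (mᵢ·tᵢ + mᵢ')`, computed in `ℝ ∪ {∞}`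
with `∞` absorbing for `+` and `·`. -/
noncomputable def valSum : List ((MSum × MSum) × ℝ≥0) → MSum := fun l =>
  Tropical.trop ((l.map (fun p => mulTime p.1.1.untrop p.2 + p.1.2.untrop)).sum)


/-! # Auxiliary lemmas for the proof -/

private lemma trop_sum_attained {ι : Type} [DecidableEq ι] (s : Finset ι) (f : ι → MSum)
    (h : (∑ i ∈ s, f i) ≠ 0) : ∃ i ∈ s, f i = ∑ i ∈ s, f i := by
  induction s using Finset.induction_on with
  | empty => simp at h
  | @insert a s ha ih =>
    rw [Finset.sum_insert ha] at h ⊢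
    have hc : f a + ∑ i ∈ s, f i = f a ∨ f a + ∑ i ∈ s, f i = ∑ i ∈ s, f i := by
      rw [Tropical.trop_add_def]
      rcases min_choice (Tropical.untrop (f a)) (Tropical.untrop (∑ i ∈ s, f i)) with h' | h' <;>
        simp [h']
    rcases hc with h' | h'
    · exact ⟨a, Finset.mem_insert_self a s, h'.symm⟩
    · have hs : (∑ i ∈ s, f i) ≠ 0 := by rw [← h']; exact h
      obtain ⟨i, hi, hfi⟩ := ih hs
      exact ⟨i, Finset.mem_insert_of_mem hi, by rw [h']; exact hfi⟩

private lemma slope_eq (M c : WithTop ℝ) (k : ℝ) (n m : ℕ) (hnm : n ≠ m)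
    (h1 : mulTime M ((n : ℝ≥0)) + c = ((k * n : ℝ) : WithTop ℝ))
    (h2 : mulTime M ((m : ℝ≥0)) + c = ((k * m : ℝ) : WithTop ℝ)) :
    M = ((k : ℝ) : WithTop ℝ) := by
  cases M with
  | top =>
    exfalso
    simp only [mulTime, WithTop.map_top, top_add] at h1
    exact WithTop.coe_ne_top h1.symm
  | coe a =>
    cases c with
    | top =>
      exfalso
      simp only [mulTime, WithTop.map_coe, add_top] at h1
      exact WithTop.coe_ne_top h1.symm
    | coe c' =>
      simp only [mulTime, WithTop.map_coe, ← WithTop.coe_add, WithTop.coe_inj,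
        NNReal.coe_natCast] at h1 h2
      have hn : (n : ℝ) ≠ (m : ℝ) := by exact_mod_cast hnm
      have : a * ((n : ℝ) - m) = k * ((n : ℝ) - m) := by ring_nf; nlinarith [h1, h2]
      have ha : a = k := mul_right_cancel₀ (sub_ne_zero.mpr hn) this
      rw [ha]

private noncomputable def gg : Bool → MSum × MSum := fun a =>
  if a then (Tropical.trop ((1 : ℝ) : WithTop ℝ), Tropical.trop ((0 : ℝ) : WithTop ℝ))
  else (Tropical.trop ((2 : ℝ) : WithTop ℝ), Tropical.trop ((0 : ℝ) : WithTop ℝ))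

private lemma valComp_single (a : Bool) (t : ℝ≥0) :
    valComp valSum gg ⟨[(a, t)], by simp⟩
      = Tropical.trop (((if a then (1:ℝ) else 2) * (t : ℝ) : ℝ) : WithTop ℝ) := by
  cases a <;> simp [valComp, valSum, gg, mulTime] <;> norm_cast

private lemma runOn_single {A : Type} (T : TimedAutomaton A) (a : A) (t : ℝ≥0)
    (es : List (Edge T.L A T.C)) (hes : es ∈ T.RunOn ⟨[(a, t)], by simp⟩) :
    ∃ e, es = [e] ∧ e ∈ T.E ∧ e.src ∈ T.I := by
  obtain ⟨ℓ₀, hℓ₀, hr⟩ := hes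
  match es with
  | [] => simp [TimedAutomaton.IsRunFrom] at hr
  | [e] =>
    obtain ⟨hE, hsrc, -⟩ := hr
    exact ⟨e, rfl, hE, hsrc ▸ hℓ₀⟩
  | e :: e' :: es =>
    obtain ⟨-, -, -, -, hr'⟩ := hr
    simp [TimedAutomaton.IsRunFrom] at hr'

private lemma behavior_single (W : WTA Bool MSum) (ℓ₀ : W.L) (hI : W.I = {ℓ₀})
    (a : Bool) (t : ℝ≥0) (k : ℝ)
    (hb : W.behavior valSum ⟨[(a, t)], by simp⟩ = Tropical.trop ((k * t : ℝ) : WithTop ℝ)) :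
    ∃ e ∈ W.E, mulTime (Tropical.untrop (W.wtL ℓ₀)) t + Tropical.untrop (W.wtE e)
      = ((k * t : ℝ) : WithTop ℝ) := by
  classical
  have hfin : (W.toTimedAutomaton.RunOn ⟨[(a, t)], by simp⟩).Finite := by
    apply Set.Finite.subset (W.finE.image (fun e => [e]))
    intro es hes
    obtain ⟨e, rfl, hE, -⟩ := runOn_single _ a t es hes
    exact ⟨e, hE, rfl⟩
  rw [WTA.behavior, finsum_mem_eq_finite_toFinset_sum _ hfin] at hb
  have hb' : (∑ es ∈ hfin.toFinset, valSum (W.runWord [(a, t)] es))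
      = Tropical.trop ((k * t : ℝ) : WithTop ℝ) := hb
  have hne : (∑ es ∈ hfin.toFinset, valSum (W.runWord [(a, t)] es)) ≠ 0 := by
    rw [hb']
    intro h
    have h' := congrArg Tropical.untrop h
    rw [Tropical.untrop_trop, Tropical.untrop_zero] at h'
    exact WithTop.coe_ne_top h'
  obtain ⟨es, hmem, hval⟩ := trop_sum_attained _ _ hne
  rw [hb'] at hval
  rw [Set.Finite.mem_toFinset] at hmem
  obtain ⟨e, rfl, hE, hsrc⟩ := runOn_single _ a t _ hmem
  rw [hI, Set.mem_singleton_iff] at hsrc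
  refine ⟨e, hE, ?_⟩
  have : valSum (W.runWord [(a, t)] [e])
      = Tropical.trop (mulTime (Tropical.untrop (W.wtL e.src)) t
          + Tropical.untrop (W.wtE e)) := by
    simp [valSum, WTA.runWord]
  rw [this] at hval
  rw [← hsrc]
  exact Tropical.trop_injective hval

private lemma wtL_eq (W : WTA Bool MSum) (ℓ₀ : W.L) (hI : W.I = {ℓ₀})
    (hbeh : ∀ w, W.behavior valSum w = valComp valSum gg w) (a : Bool) :
    Tropical.untrop (W.wtL ℓ₀) = (((if a then (1:ℝ) else 2) : ℝ) : WithTop ℝ) := by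
  classical
  set k : ℝ := if a then (1:ℝ) else 2 with hk
  have hedge : ∀ n : ℕ, ∃ e ∈ W.E,
      mulTime (Tropical.untrop (W.wtL ℓ₀)) ((n : ℝ≥0)) + Tropical.untrop (W.wtE e)
        = ((k * n : ℝ) : WithTop ℝ) := by
    intro n
    have hb := hbeh ⟨[(a, (n : ℝ≥0))], by simp⟩
    rw [valComp_single] at hb
    have : ((((n : ℝ≥0)) : ℝ)) = ((n : ℝ)) := by push_cast; ring
    rw [this] at hb
    exact behavior_single W ℓ₀ hI a _ k hb
  choose f hfE hfP using hedge
  have : Finite ↥W.E := W.finE.to_subtype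
  obtain ⟨n, m, hnm, hfeq⟩ :=
    Finite.exists_ne_map_eq_of_infinite (fun n : ℕ => (⟨f n, hfE n⟩ : ↥W.E))
  have hfeq' : f n = f m := by simpa [Subtype.ext_iff] using hfeq
  exact slope_eq _ _ k n m hnm (hfP n) (by rw [hfeq']; exact hfP m)

private lemma key (W : WTA Bool MSum) (hI : ∃ ℓ, W.I = {ℓ}) :
    ¬ (∀ w, W.behavior valSum w = valComp valSum gg w) := by
  rintro hbeh
  obtain ⟨ℓ₀, hI⟩ := hI
  have h1 := wtL_eq W ℓ₀ hI hbeh true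
  have h2 := wtL_eq W ℓ₀ hI hbeh false
  rw [h1] at h2
  simp only [if_true, if_false, WithTop.coe_inj] at h2
  norm_num at h2

/-- Let `Σ = {a, b}` (modelled as `Bool`, `a = true`, `b = false`),
`𝕄 = 𝕄^sum` and `g(a) = (1, 0)`, `g(b) = (2, 0)`. Then `val^sum ∘ g` is not
deterministically recognizable, and hence not sequentially recognizable. -/
theorem valComp_not_deterministically_recognizable :
    ¬ QTLRecognizableBy valSum TimedAutomaton.Deterministic
        (valComp valSum (fun a : Bool =>
          if a then (Tropical.trop ((1 : ℝ) : WithTop ℝ), Tropical.trop ((0 : ℝ) : WithTop ℝ))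
          else (Tropical.trop ((2 : ℝ) : WithTop ℝ), Tropical.trop ((0 : ℝ) : WithTop ℝ)))) ∧
    ¬ QTLRecognizableBy valSum TimedAutomaton.Sequential
        (valComp valSum (fun a : Bool =>
          if a then (Tropical.trop ((1 : ℝ) : WithTop ℝ), Tropical.trop ((0 : ℝ) : WithTop ℝ))
          else (Tropical.trop ((2 : ℝ) : WithTop ℝ), Tropical.trop ((0 : ℝ) : WithTop ℝ)))) := by
  constructor
  · rintro ⟨W, hdet, hbeh⟩
    exact key W hdet.1 hbeh
  · rintro ⟨W, hseq, hbeh⟩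
    exact key W hseq.1 hbeh
end

section
/- Let Σ be an alphabet, 𝕄 = (M,+,val,𝟘) a timed valuation monoid, 𝓛 ⊆ 𝕋Σ⁺ an unambiguously recognizable timed language and r : 𝕋Σ⁺ → M a recognizable quantitative timed language over 𝕄. Then the quantitative timed language r ∩ 𝓛 is recognizable over 𝕄. -/
open scoped NNReal Classical

/-! Take the product of a weighted timed automaton `W` for `r` with an unambiguous timed
automaton `T` for `𝓛`, running their clocks side by side and weighting every product edge by
its `W`-component. Runs of the product are exactly the zipped pairs of runs of `W` and `T`. On a
word of `𝓛` the run of `T` is unique, so zipping with it is a weight-preserving bijection from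
the runs of `W` onto those of the product; on a word outside `𝓛` the product has no run. -/

namespace ClockConstraint

variable {C D : Type}

def map (f : C → D) : ClockConstraint C → ClockConstraint D
  | .tt => .tt
  | .atom x op c => .atom (f x) op c
  | .conj φ ψ => .conj (φ.map f) (ψ.map f)

theorem sat_map (f : C → D) (φ : ClockConstraint C) (ν : ClockVal D) :
    (φ.map f).Sat ν ↔ φ.Sat (ν ∘ f) := by
  induction φ with
  | tt => rfl
  | atom x op c => rfl
  | conj φ ψ ihφ ihψ => exact and_congr ihφ ihψ

def restrictInl : ClockConstraint (C ⊕ D) → ClockConstraint C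
  | .tt => .tt
  | .atom (.inl x) op c => .atom x op c
  | .atom (.inr _) _ _ => .tt
  | .conj φ ψ => .conj φ.restrictInl ψ.restrictInl

@[simp]
theorem restrictInl_map_inl (φ : ClockConstraint C) :
    (φ.map (Sum.inl : C → C ⊕ D)).restrictInl = φ := by
  induction φ with
  | tt => rfl
  | atom x op c => rfl
  | conj φ ψ ihφ ihψ => exact congrArg₂ conj ihφ ihψ

end ClockConstraint

section Product

variable {L₁ L₂ A C₁ C₂ : Type}

def Edge.prod (e₁ : Edge L₁ A C₁) (e₂ : Edge L₂ A C₂) : Edge (L₁ × L₂) A (C₁ ⊕ C₂) where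
  src := (e₁.src, e₂.src)
  label := e₁.label
  guard := .conj (e₁.guard.map .inl) (e₂.guard.map .inr)
  reset := {x | Sum.elim (· ∈ e₁.reset) (· ∈ e₂.reset) x}
  dst := (e₁.dst, e₂.dst)

def Edge.fst (e : Edge (L₁ × L₂) A (C₁ ⊕ C₂)) : Edge L₁ A C₁ where
  src := e.src.1
  label := e.label
  guard := match e.guard with
    | .conj φ _ => φ.restrictInl
    | φ => φ.restrictInl
  reset := Sum.inl ⁻¹' e.reset
  dst := e.dst.1

@[simp]
theorem Edge.fst_prod (e₁ : Edge L₁ A C₁) (e₂ : Edge L₂ A C₂) : (e₁.prod e₂).fst = e₁ := by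
  simp [Edge.fst, Edge.prod]

theorem Edge.sat_prod_guard (e₁ : Edge L₁ A C₁) (e₂ : Edge L₂ A C₂) (ν : ClockVal (C₁ ⊕ C₂)) :
    (e₁.prod e₂).guard.Sat ν ↔ e₁.guard.Sat (ν ∘ Sum.inl) ∧ e₂.guard.Sat (ν ∘ Sum.inr) :=
  and_congr (ClockConstraint.sat_map _ _ _) (ClockConstraint.sat_map _ _ _)

theorem Edge.map_fst_zipWith_prod {l₁ : List (Edge L₁ A C₁)} {l₂ : List (Edge L₂ A C₂)}
    (h : l₁.length ≤ l₂.length) : (List.zipWith Edge.prod l₁ l₂).map Edge.fst = l₁ := by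
  simpa [List.zip_eq_zipWith] using List.map_fst_zip h

variable {M : Type}

/-- Reducible, so that `(W.prod T).L` is `W.L × T.L` when rewriting along `WTA.runOn_prod`. -/
abbrev WTA.prod (W : WTA A M) (T : TimedAutomaton A) : WTA A M where
  L := W.L × T.L
  C := W.C ⊕ T.C
  finL := have := W.finL; have := T.finL; inferInstance
  finC := have := W.finC; have := T.finC; inferInstance
  I := W.I ×ˢ T.I
  F := W.F ×ˢ T.F
  E := {e | ∃ e₁ ∈ W.E, ∃ e₂ ∈ T.E, e₁.label = e₂.label ∧ e₁.prod e₂ = e}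
  finE := (W.finE.image2 Edge.prod T.finE).subset
    fun _ ⟨e₁, h₁, e₂, h₂, _, he⟩ => ⟨e₁, h₁, e₂, h₂, he⟩
  wtL ℓ := W.wtL ℓ.1
  wtE e := W.wtE e.fst

theorem WTA.isRunFrom_prod_iff (W : WTA A M) (T : TimedAutomaton A) (w : List (A × ℝ≥0)) :
    ∀ (ℓ : W.L × T.L) (ν : ClockVal (W.C ⊕ T.C)) (es : List (Edge (W.L × T.L) A (W.C ⊕ T.C))),
      (W.prod T).IsRunFrom ℓ ν w es ↔ ∃ es₁ es₂, W.IsRunFrom ℓ.1 (ν ∘ Sum.inl) w es₁ ∧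
        T.IsRunFrom ℓ.2 (ν ∘ Sum.inr) w es₂ ∧ List.zipWith Edge.prod es₁ es₂ = es := by
  induction w with
  | nil =>
    intro ℓ ν es
    constructor
    · intro h
      cases es with
      | nil => exact ⟨[], [], h.1, h.2, rfl⟩
      | cons => exact h.elim
    · rintro ⟨_ | _, _ | _, h₁, h₂, rfl⟩
      · exact ⟨h₁, h₂⟩
      all_goals first | exact h₁.elim | exact h₂.elim
  | cons p w ih =>
    obtain ⟨a, t⟩ := p
    intro ℓ ν es
    constructor
    · intro h
      cases es with
      | nil => exact h.elim
      | cons e es =>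
        obtain ⟨⟨e₁, he₁, e₂, he₂, hlab, rfl⟩, hsrc, ha, hsat, hrun⟩ := h
        obtain ⟨es₁, es₂, h₁, h₂, rfl⟩ := (ih _ _ _).mp hrun
        obtain ⟨hsat₁, hsat₂⟩ := (Edge.sat_prod_guard _ _ _).mp hsat
        subst hsrc
        exact ⟨e₁ :: es₁, e₂ :: es₂, ⟨he₁, rfl, ha, hsat₁, h₁⟩,
          ⟨he₂, rfl, hlab ▸ ha, hsat₂, h₂⟩, rfl⟩
    · rintro ⟨_ | ⟨e₁, es₁⟩, _ | ⟨e₂, es₂⟩, h₁, h₂, rfl⟩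
      all_goals try exact h₁.elim
      all_goals try exact h₂.elim
      obtain ⟨he₁, hsrc₁, ha₁, hsat₁, h₁⟩ := h₁
      obtain ⟨he₂, hsrc₂, ha₂, hsat₂, h₂⟩ := h₂
      refine ⟨⟨e₁, he₁, e₂, he₂, ha₁.trans ha₂.symm, rfl⟩, Prod.ext hsrc₁ hsrc₂, ha₁,
        (Edge.sat_prod_guard _ _ _).mpr ⟨hsat₁, hsat₂⟩, (ih _ _ _).mpr ⟨es₁, es₂, h₁, h₂, rfl⟩⟩

theorem TimedAutomaton.IsRunFrom.length_eq {T : TimedAutomaton A} {w : List (A × ℝ≥0)} :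
    ∀ {ℓ ν es}, T.IsRunFrom ℓ ν w es → es.length = w.length := by
  induction w with
  | nil => rintro _ _ (_ | _) h <;> first | rfl | exact h.elim
  | cons p w ih =>
    rintro _ _ (_ | _) h
    · exact h.elim
    · exact congrArg Nat.succ (ih h.2.2.2.2)

theorem TimedAutomaton.length_eq_of_mem_runOn {T : TimedAutomaton A} {w : TimedWord A}
    {es : List (Edge T.L A T.C)} (h : es ∈ T.RunOn w) : es.length = w.1.length :=
  let ⟨_, _, hrun⟩ := h
  hrun.length_eq

theorem WTA.runOn_prod (W : WTA A M) (T : TimedAutomaton A) (w : TimedWord A) :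
    (W.prod T).RunOn w = Set.image2 (List.zipWith Edge.prod) (W.RunOn w) (T.RunOn w) := by
  ext es
  constructor
  · rintro ⟨ℓ, ⟨hℓ₁, hℓ₂⟩, hrun⟩
    obtain ⟨es₁, es₂, h₁, h₂, rfl⟩ := (W.isRunFrom_prod_iff T w.1 ℓ _ es).mp hrun
    exact ⟨es₁, ⟨ℓ.1, hℓ₁, h₁⟩, es₂, ⟨ℓ.2, hℓ₂, h₂⟩, rfl⟩
  · rintro ⟨es₁, ⟨ℓ₁, hℓ₁, h₁⟩, es₂, ⟨ℓ₂, hℓ₂, h₂⟩, rfl⟩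
    exact ⟨(ℓ₁, ℓ₂), ⟨hℓ₁, hℓ₂⟩, (W.isRunFrom_prod_iff T w.1 _ _ _).mpr ⟨es₁, es₂, h₁, h₂, rfl⟩⟩

theorem WTA.runWord_prod (W : WTA A M) (T : TimedAutomaton A) (w : List (A × ℝ≥0))
    (es : List (Edge (W.L × T.L) A (W.C ⊕ T.C))) :
    (W.prod T).runWord w es = W.runWord w (es.map Edge.fst) := by
  rw [WTA.runWord, WTA.runWord, List.zipWith_map_right]; rfl

theorem WTA.behavior_prod_of_unambiguous [AddCommMonoid M] (val : List ((M × M) × ℝ≥0) → M)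
    (W : WTA A M) {T : TimedAutomaton A} (hT : T.Unambiguous) (w : TimedWord A) :
    (W.prod T).behavior val w = interQTL (W.behavior val) T.Lang w := by
  rw [interQTL, WTA.behavior, W.runOn_prod T]
  split_ifs with hw
  · obtain ⟨es₂, hes₂⟩ := hw
    have hfst : Set.LeftInvOn (List.map Edge.fst) (List.zipWith Edge.prod · es₂) (W.RunOn w) :=
      fun es₁ hes₁ => Edge.map_fst_zipWith_prod
        ((TimedAutomaton.length_eq_of_mem_runOn hes₁).trans
          (TimedAutomaton.length_eq_of_mem_runOn hes₂).symm).le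
    rw [(hT w).eq_singleton_of_mem hes₂, Set.image2_singleton_right, finsum_mem_image hfst.injOn]
    exact finsum_mem_congr rfl fun es₁ hes₁ => by rw [WTA.runWord_prod, hfst hes₁]
  · rw [Set.not_nonempty_iff_eq_empty.mp hw, Set.image2_empty_right, finsum_mem_empty]

end Product

theorem interQTL_recognizable_of_unambiguous_general {S M : Type}
    [AddCommMonoid M] (val : List ((M × M) × ℝ≥0) → M)
    (𝓛 : Set (TimedWord S)) (h𝓛 : TLRecognizableBy TimedAutomaton.Unambiguous 𝓛)
    (r : TimedWord S → M) (hr : QTLRecognizable val r) :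
    QTLRecognizable val (interQTL r 𝓛) := by
  obtain ⟨T, hT, rfl⟩ := h𝓛
  obtain ⟨W, hW⟩ := hr
  refine ⟨W.prod T, fun w => ?_⟩
  rw [W.behavior_prod_of_unambiguous val hT, interQTL, interQTL, hW]

/-- If `𝓛 ⊆ 𝕋Σ⁺` is an unambiguously recognizable timed language and
`r : 𝕋Σ⁺ → M` is a recognizable quantitative timed language over a timed valuation monoid
`𝕄`, then `r ∩ 𝓛` is recognizable over `𝕄`. -/
theorem interQTL_recognizable_of_unambiguous {S M : Type} [Finite S] [Nonempty S]
    [AddCommMonoid M] (val : List ((M × M) × ℝ≥0) → M)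
    (𝓛 : Set (TimedWord S)) (h𝓛 : TLRecognizableBy TimedAutomaton.Unambiguous 𝓛)
    (r : TimedWord S → M) (hr : QTLRecognizable val r) :
    QTLRecognizable val (interQTL r 𝓛) :=
  interQTL_recognizable_of_unambiguous_general val 𝓛 h𝓛 r hr
end
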